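/- arXiv:2212.14365 — 7 statements merged into one kernel-verified Lean document; each statement's English description precedes it below -/
import Mathlib

section
/- Let E = EuclideanSpace ℝ (Fin d) with d ≥ 1, let T x = R x + g be a rigid motion of E, and let f, f̃ : E → E satisfy f̃ (T x) = R (f x) for all x ∈ E. Fix reference points x₁, x₂ ∈ E and a kernel network κ : (ℝ × ℝ) → ℝ → ℝ → Matrix (Fin dₕ) (Fin dₕ) ℝ, and define the INO kernels m(x, y) := κ (overline_{x₂ − x₁}(y − x)) ‖f x‖ ‖f y‖ and m̃(x', y') := κ (overline_{T x₂ − T x₁}(y' − x')) ‖f̃ x'‖ ‖f̃ y'‖. Then m̃ (T x) (T y) = m x y for all x, y ∈ E. -/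
open MeasureTheory
open scoped RealInnerProductSpace

/-- Decomposed Euclidean norm (edge feature) of `z` relative to a reference edge `e`. -/
noncomputable def overline {d : ℕ} (e z : EuclideanSpace ℝ (Fin d)) : ℝ × ℝ :=
  (⟪z, e⟫ / ‖e‖, Real.sqrt (‖z‖ ^ 2 - (⟪z, e⟫ / ‖e‖) ^ 2))

/-- The INO kernel built from an input function `f`, reference points `x₁, x₂`,
and a kernel network `κ`. -/
noncomputable def inoKernel {d dₕ : ℕ}
    (f : EuclideanSpace ℝ (Fin d) → EuclideanSpace ℝ (Fin d))
    (x₁ x₂ : EuclideanSpace ℝ (Fin d))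
    (κ : ℝ × ℝ → ℝ → ℝ → Matrix (Fin dₕ) (Fin dₕ) ℝ)
    (x y : EuclideanSpace ℝ (Fin d)) : Matrix (Fin dₕ) (Fin dₕ) ℝ :=
  κ (overline (x₂ - x₁) (y - x)) ‖f x‖ ‖f y‖

/-- the INO kernel is invariant under rigid motions. -/
theorem inoKernel_rigid_invariant {d dₕ : ℕ} (hd : 1 ≤ d)
    (R : EuclideanSpace ℝ (Fin d) ≃ₗᵢ[ℝ] EuclideanSpace ℝ (Fin d))
    (g : EuclideanSpace ℝ (Fin d)) (T : EuclideanSpace ℝ (Fin d) → EuclideanSpace ℝ (Fin d))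
    (hT : ∀ x, T x = R x + g)
    (f f' : EuclideanSpace ℝ (Fin d) → EuclideanSpace ℝ (Fin d))
    (hf : ∀ x, f' (T x) = R (f x))
    (x₁ x₂ : EuclideanSpace ℝ (Fin d))
    (κ : ℝ × ℝ → ℝ → ℝ → Matrix (Fin dₕ) (Fin dₕ) ℝ) :
    ∀ x y : EuclideanSpace ℝ (Fin d),
      inoKernel f' (T x₁) (T x₂) κ (T x) (T y) = inoKernel f x₁ x₂ κ x y := by
  intro x y
  have hdiff : ∀ a b : EuclideanSpace ℝ (Fin d), T a - T b = R (a - b) := by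
    intro a b; simp [hT, map_sub]
  simp only [inoKernel, overline, hdiff, hf, R.norm_map, R.inner_map_map]
end

section
/- Let E = EuclideanSpace ℝ (Fin d) with d ≥ 1, let T x = R x + g be a rigid motion of E, Ω ⊆ E a measurable set, and let f, f̃ : E → E satisfy f̃ (T x) = R (f x) for all x ∈ E. Fix reference points x₁, x₂ ∈ E, a kernel network κ : (ℝ × ℝ) → ℝ → ℝ → Matrix (Fin dₕ) (Fin dₕ) ℝ, lifting parameters P, p : Fin dₕ → ℝ, iterative-layer parameters τ ∈ ℝ, W : Matrix (Fin dₕ) (Fin dₕ) ℝ, c : Fin dₕ → ℝ, and an arbitrary activation σ : (Fin dₕ → ℝ) → (Fin dₕ → ℝ). Define the hidden features h : E → ℕ → (Fin dₕ → ℝ) by h x 0 = ‖f x‖ • P + p and h x (j+1) = h x j + τ • σ (W.mulVec (h x j) + (∫ y in Ω, (m x y).mulVec (h y j)) + c), where m(x, y) := κ (overline_{x₂ − x₁}(y − x)) ‖f x‖ ‖f y‖; define h̃ by the same recursion with f̃, the transformed kernel m̃(x', y') := κ (overline_{T x₂ − T x₁}(y' − x')) ‖f̃ x'‖ ‖f̃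 y'‖, and the transformed domain T '' Ω in place of f, m, Ω. Then the hidden features of an INO are frame-invariant at every layer: h̃ (T x) j = h x j for all x ∈ E and all j ∈ ℕ. -/
open MeasureTheory
open scoped RealInnerProductSpace

/-- The INO hidden (layer feature) functions: `inoHidden … j x` is the feature of the
`j`-th layer at `x`, with lifting `h(x,0) = ‖f x‖ • P + p` and the iterative
integral-operator layer update. -/
noncomputable def inoHidden {d dₕ : ℕ}
    (f : EuclideanSpace ℝ (Fin d) → EuclideanSpace ℝ (Fin d))
    (x₁ x₂ : EuclideanSpace ℝ (Fin d))
    (κ : ℝ × ℝ → ℝ → ℝ → Matrix (Fin dₕ) (Fin dₕ) ℝ)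
    (P p c : Fin dₕ → ℝ) (W : Matrix (Fin dₕ) (Fin dₕ) ℝ) (τ : ℝ)
    (σ : (Fin dₕ → ℝ) → (Fin dₕ → ℝ)) (Ω : Set (EuclideanSpace ℝ (Fin d))) :
    ℕ → EuclideanSpace ℝ (Fin d) → (Fin dₕ → ℝ)
  | 0, x => ‖f x‖ • P + p
  | j + 1, x =>
      inoHidden f x₁ x₂ κ P p c W τ σ Ω j x +
        τ • σ (W.mulVec (inoHidden f x₁ x₂ κ P p c W τ σ Ω j x) +
          (∫ y in Ω, (inoKernel f x₁ x₂ κ x y).mulVec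
            (inoHidden f x₁ x₂ κ P p c W τ σ Ω j y)) + c)

/-- the hidden features of an INO are frame-invariant at every layer. -/
theorem inoHidden_rigid_invariant {d dₕ : ℕ} (hd : 1 ≤ d)
    (R : EuclideanSpace ℝ (Fin d) ≃ₗᵢ[ℝ] EuclideanSpace ℝ (Fin d))
    (g : EuclideanSpace ℝ (Fin d)) (T : EuclideanSpace ℝ (Fin d) → EuclideanSpace ℝ (Fin d))
    (hT : ∀ x, T x = R x + g)
    (Ω : Set (EuclideanSpace ℝ (Fin d))) (hΩ : MeasurableSet Ω)
    (f f' : EuclideanSpace ℝ (Fin d) → EuclideanSpace ℝ (Fin d))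
    (hf : ∀ x, f' (T x) = R (f x))
    (x₁ x₂ : EuclideanSpace ℝ (Fin d))
    (κ : ℝ × ℝ → ℝ → ℝ → Matrix (Fin dₕ) (Fin dₕ) ℝ)
    (P p c : Fin dₕ → ℝ) (W : Matrix (Fin dₕ) (Fin dₕ) ℝ) (τ : ℝ)
    (σ : (Fin dₕ → ℝ) → (Fin dₕ → ℝ)) :
    ∀ (x : EuclideanSpace ℝ (Fin d)) (j : ℕ),
      inoHidden f' (T x₁) (T x₂) κ P p c W τ σ (T '' Ω) j (T x) =
        inoHidden f x₁ x₂ κ P p c W τ σ Ω j x := by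
  -- T is measure-preserving and a measurable embedding
  have hTeq : T = fun x => R x + g := funext hT
  have hmp : MeasurePreserving T volume volume := by
    rw [hTeq]
    exact (measurePreserving_add_right volume g).comp R.measurePreserving
  have hemb : MeasurableEmbedding T := by
    rw [hTeq]
    exact (R.toHomeomorph.trans (Homeomorph.addRight g)).measurableEmbedding
  -- norms transform
  have hnorm : ∀ x, ‖f' (T x)‖ = ‖f x‖ := fun x => by rw [hf x, R.norm_map]
  -- kernel transforms
  have hker : ∀ x y, inoKernel f' (T x₁) (T x₂) κ (T x) (T y) = inoKernel f x₁ x₂ κ x y := by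
    intro x y
    have hdiff : ∀ a b, T a - T b = R (a - b) := by
      intro a b; simp [hT, map_sub]
    unfold inoKernel overline
    rw [hdiff, hdiff, R.inner_map_map, R.norm_map, R.norm_map, hnorm, hnorm]
  intro x j
  induction j generalizing x with
  | zero => simp [inoHidden, hnorm]
  | succ j ih =>
    simp only [inoHidden]
    rw [ih, hmp.setIntegral_image_emb hemb]
    have hint : (∫ y in Ω, (inoKernel f' (T x₁) (T x₂) κ (T x) (T y)).mulVec
          (inoHidden f' (T x₁) (T x₂) κ P p c W τ σ (T '' Ω) j (T y)))
        = ∫ y in Ω, (inoKernel f x₁ x₂ κ x y).mulVec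
          (inoHidden f x₁ x₂ κ P p c W τ σ Ω j y) :=
      setIntegral_congr_fun hΩ fun y _ => by rw [hker, ih]
    rw [hint]
end

section
/- (Invariance for INO-scalar.) Let E = EuclideanSpace ℝ (Fin d) with d ≥ 1, let T x = R x + g be a rigid motion of E, Ω ⊆ E a measurable set, and let f, f̃ : E → E satisfy f̃ (T x) = R (f x) for all x ∈ E. With hidden features h (built from f, reference points x₁, x₂, kernel network κ, lifting parameters P, p, iterative parameters τ, W, c, activation σ, and domain Ω as in the INO-scalar architecture) and h̃ (built by the same recursion from f̃, the transformed reference points T x₁, T x₂, and the transformed domain T '' Ω), fix a depth L ∈ ℕ and projection parameters Q₁ : Matrix (Fin d_Q) (Fin dₕ) ℝ, Q₂ : Matrix (Fin d_u) (Fin d_Q) ℝ, q₁ : Fin d_Q → ℝ, q₂ : Fin d_u → ℝ, and an arbitrary activation σ' : (Fin d_Q → ℝ) → (Fin d_Q → ℝ). Define the INO-scalar outputs G[f](x) := Q₂.mulVec (σ' (Q₁.mulVec (h x L) + q₁)) + q₂ and G̃[f̃](x') := Q₂.mulVec (σ' (Q₁.mulVec (h̃ x' L) + q₁)) + q₂.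 Then the learned operator is translation- and rotation-invariant: G̃[f̃] (T x) = G[f] x for all x ∈ E. -/
open MeasureTheory
open scoped RealInnerProductSpace

lemma hidden_eq {d dₕ : ℕ}
    (R : EuclideanSpace ℝ (Fin d) ≃ₗᵢ[ℝ] EuclideanSpace ℝ (Fin d))
    (g : EuclideanSpace ℝ (Fin d)) (T : EuclideanSpace ℝ (Fin d) → EuclideanSpace ℝ (Fin d))
    (hT : ∀ x, T x = R x + g)
    (Ω : Set (EuclideanSpace ℝ (Fin d)))
    (f f' : EuclideanSpace ℝ (Fin d) → EuclideanSpace ℝ (Fin d))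
    (hf : ∀ x, f' (T x) = R (f x))
    (x₁ x₂ : EuclideanSpace ℝ (Fin d))
    (κ : ℝ × ℝ → ℝ → ℝ → Matrix (Fin dₕ) (Fin dₕ) ℝ)
    (P p c : Fin dₕ → ℝ) (W : Matrix (Fin dₕ) (Fin dₕ) ℝ) (τ : ℝ)
    (σ : (Fin dₕ → ℝ) → (Fin dₕ → ℝ)) :
    ∀ j x, inoHidden f' (T x₁) (T x₂) κ P p c W τ σ (T '' Ω) j (T x) =
      inoHidden f x₁ x₂ κ P p c W τ σ Ω j x := by
  have hTmp : MeasurePreserving T := by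
    have : T = (fun z => z + g) ∘ R := by funext z; simp [hT]
    rw [this]
    exact (measurePreserving_add_right volume g).comp R.measurePreserving
  have hTemb : MeasurableEmbedding T := by
    have : T = (fun z => z + g) ∘ R := by funext z; simp [hT]
    rw [this]
    exact (MeasurableEquiv.addRight g).measurableEmbedding.comp
      R.toHomeomorph.toMeasurableEquiv.measurableEmbedding
  have hker : ∀ x y, inoKernel f' (T x₁) (T x₂) κ (T x) (T y) = inoKernel f x₁ x₂ κ x y := by
    intro x y
    have h1 : T x₂ - T x₁ = R (x₂ - x₁) := by simp [hT, map_sub]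
    have h2 : T y - T x = R (y - x) := by simp [hT, map_sub]
    unfold inoKernel overline
    rw [h1, h2, hf, hf, LinearIsometryEquiv.inner_map_map, LinearIsometryEquiv.norm_map,
      LinearIsometryEquiv.norm_map, LinearIsometryEquiv.norm_map, LinearIsometryEquiv.norm_map]
  intro j
  induction j with
  | zero => intro x; simp [inoHidden, hf]
  | succ j ih =>
    intro x
    simp only [inoHidden]
    rw [ih x]
    congr 2
    rw [hTmp.setIntegral_image_emb hTemb]
    simp only [hker, ih]

/-- Invariance for INO-scalar: the INO-scalar operator, obtained from the
hidden features by the projection block, is translation- and rotation-invariant. -/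
theorem ino_scalar_rigid_invariant {d dₕ d_Q d_u : ℕ} (hd : 1 ≤ d)
    (R : EuclideanSpace ℝ (Fin d) ≃ₗᵢ[ℝ] EuclideanSpace ℝ (Fin d))
    (g : EuclideanSpace ℝ (Fin d)) (T : EuclideanSpace ℝ (Fin d) → EuclideanSpace ℝ (Fin d))
    (hT : ∀ x, T x = R x + g)
    (Ω : Set (EuclideanSpace ℝ (Fin d))) (hΩ : MeasurableSet Ω)
    (f f' : EuclideanSpace ℝ (Fin d) → EuclideanSpace ℝ (Fin d))
    (hf : ∀ x, f' (T x) = R (f x))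
    (x₁ x₂ : EuclideanSpace ℝ (Fin d))
    (κ : ℝ × ℝ → ℝ → ℝ → Matrix (Fin dₕ) (Fin dₕ) ℝ)
    (P p c : Fin dₕ → ℝ) (W : Matrix (Fin dₕ) (Fin dₕ) ℝ) (τ : ℝ)
    (σ : (Fin dₕ → ℝ) → (Fin dₕ → ℝ))
    (L : ℕ)
    (Q₁ : Matrix (Fin d_Q) (Fin dₕ) ℝ) (Q₂ : Matrix (Fin d_u) (Fin d_Q) ℝ)
    (q₁ : Fin d_Q → ℝ) (q₂ : Fin d_u → ℝ)
    (σ' : (Fin d_Q → ℝ) → (Fin d_Q → ℝ)) :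
    ∀ x : EuclideanSpace ℝ (Fin d),
      Q₂.mulVec (σ' (Q₁.mulVec
          (inoHidden f' (T x₁) (T x₂) κ P p c W τ σ (T '' Ω) L (T x)) + q₁)) + q₂ =
        Q₂.mulVec (σ' (Q₁.mulVec
          (inoHidden f x₁ x₂ κ P p c W τ σ Ω L x) + q₁)) + q₂ := by
  intro x
  rw [hidden_eq R g T hT Ω f f' hf x₁ x₂ κ P p c W τ σ L x]
end

section
/- Let E = EuclideanSpace ℝ (Fin d) with d ≥ 1, let T x = R x + g be a rigid motion of E, and Ω ⊆ E a measurable set. Let m, m̃ : E → E → Matrix (Fin dₕ) (Fin dₕ) ℝ satisfy m̃ (T x) (T y) = m x y for all x, y ∈ E, let η, η̃ : E → (Fin dₕ → ℝ) satisfy η̃ (T y) = η y for all y ∈ E, and let ξ, ξ̃ : E → E satisfy ξ̃ (T x) = R (ξ x) + g for all x ∈ E. Then for every τ ∈ ℝ and every φ : (Fin dₕ → ℝ) → ℝ, the coordinate-update layer is translation-invariant and rotation-equivariant: ξ̃ (T x) + τ • (∫ y' in T '' Ω, φ ((m̃ (T x) y').mulVec (η̃ y')) • (T x − y') ∂(volume))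 = R (ξ x + τ • (∫ y in Ω, φ ((m x y).mulVec (η y)) • (x − y) ∂(volume))) + g for all x ∈ E. -/
open MeasureTheory
open scoped RealInnerProductSpace

/-- the coordinate-update layer is translation-invariant and
rotation-equivariant. -/
theorem coord_layer_rigid_equivariant {d dₕ : ℕ} (hd : 1 ≤ d)
    (R : EuclideanSpace ℝ (Fin d) ≃ₗᵢ[ℝ] EuclideanSpace ℝ (Fin d))
    (g : EuclideanSpace ℝ (Fin d)) (T : EuclideanSpace ℝ (Fin d) → EuclideanSpace ℝ (Fin d))
    (hT : ∀ x, T x = R x + g)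
    (Ω : Set (EuclideanSpace ℝ (Fin d))) (hΩ : MeasurableSet Ω)
    (m m' : EuclideanSpace ℝ (Fin d) → EuclideanSpace ℝ (Fin d) → Matrix (Fin dₕ) (Fin dₕ) ℝ)
    (hm : ∀ x y, m' (T x) (T y) = m x y)
    (η η' : EuclideanSpace ℝ (Fin d) → (Fin dₕ → ℝ))
    (hη : ∀ y, η' (T y) = η y)
    (ξ ξ' : EuclideanSpace ℝ (Fin d) → EuclideanSpace ℝ (Fin d))
    (hξ : ∀ x, ξ' (T x) = R (ξ x) + g) :
    ∀ (τ : ℝ) (φ : (Fin dₕ → ℝ) → ℝ) (x : EuclideanSpace ℝ (Fin d)),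
      ξ' (T x) + τ • (∫ y' in T '' Ω,
          φ ((m' (T x) y').mulVec (η' y')) • (T x - y') ∂(volume)) =
        R (ξ x + τ • (∫ y in Ω,
          φ ((m x y).mulVec (η y)) • (x - y) ∂(volume))) + g := by
  intro τ φ x
  have hTfun : T = (fun z => z + g) ∘ ⇑R := by
    funext z; simp [hT]
  have hmp : MeasurePreserving T volume volume := by
    rw [hTfun]
    exact (measurePreserving_add_right volume g).comp R.measurePreserving
  have hemb : MeasurableEmbedding T := by
    rw [hTfun]
    exact (MeasurableEquiv.addRight g).measurableEmbedding.comp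
      R.toHomeomorph.toMeasurableEquiv.measurableEmbedding
  have hset : (∫ y' in T '' Ω, φ ((m' (T x) y').mulVec (η' y')) • (T x - y') ∂(volume))
      = ∫ y in Ω, φ ((m' (T x) (T y)).mulVec (η' (T y))) • (T x - T y) ∂(volume) :=
    hmp.setIntegral_image_emb hemb _ Ω
  have hdiff : ∀ y, T x - T y = R (x - y) := by
    intro y; simp only [hT, map_sub R]; abel
  have hint : (∫ y in Ω, φ ((m' (T x) (T y)).mulVec (η' (T y))) • (T x - T y) ∂(volume))
      = R (∫ y in Ω, φ ((m x y).mulVec (η y)) • (x - y) ∂(volume)) := by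
    have h1 : (∫ y in Ω, φ ((m' (T x) (T y)).mulVec (η' (T y))) • (T x - T y) ∂(volume))
        = ∫ y in Ω, R.toContinuousLinearEquiv (φ ((m x y).mulVec (η y)) • (x - y)) ∂(volume) := by
      congr 1
      funext y
      rw [hm, hη, hdiff y, _root_.map_smul]
      rfl
    rw [h1, R.toContinuousLinearEquiv.integral_comp_comm]
    rfl
  rw [hξ, hset, hint, map_add, LinearIsometryEquiv.map_smul]
  abel
end

section
/- Let E = EuclideanSpace ℝ (Fin d) with d ≥ 1, let T x = R x + g be a rigid motion of E, Ω ⊆ E a measurable set, and let f, f̃ : E → E satisfy f̃ (T x) = R (f x) for all x ∈ E. Let h and h̃ be the INO hidden features built as in the INO architecture from (f, reference points x₁, x₂, kernel network κ, parameters P, p, τ, W, c, σ, domain Ω) and from (f̃, T x₁, T x₂, κ, P, p, τ, W, c, σ, T '' Ω) respectively, with kernels m and m̃. Given φ : (Fin dₕ → ℝ) → ℝ, define the coordinate features X : E → ℕ → E by X x 0 = x and X x (j+1) = X x j + τ • (∫ y in Ω, φ ((m x y).mulVec (h y j)) • (x − y)), and define X̃ by the same recursion with m̃, h̃, T '' Ω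 in place of m, h, Ω. Then the coordinate features are translation- and rotation-equivariant at every layer: X̃ (T x) j = R (X x j) + g for all x ∈ E and all j ∈ ℕ. -/
open MeasureTheory
open scoped RealInnerProductSpace

/-- The INO coordinate features: `inoCoord … j x` is the updated coordinate after `j`
iterative layers, with `x(x,0) = x` and the coordinate-update layer. -/
noncomputable def inoCoord {d dₕ : ℕ}
    (f : EuclideanSpace ℝ (Fin d) → EuclideanSpace ℝ (Fin d))
    (x₁ x₂ : EuclideanSpace ℝ (Fin d))
    (κ : ℝ × ℝ → ℝ → ℝ → Matrix (Fin dₕ) (Fin dₕ) ℝ)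
    (P p c : Fin dₕ → ℝ) (W : Matrix (Fin dₕ) (Fin dₕ) ℝ) (τ : ℝ)
    (σ : (Fin dₕ → ℝ) → (Fin dₕ → ℝ)) (φ : (Fin dₕ → ℝ) → ℝ)
    (Ω : Set (EuclideanSpace ℝ (Fin d))) :
    ℕ → EuclideanSpace ℝ (Fin d) → EuclideanSpace ℝ (Fin d)
  | 0, x => x
  | j + 1, x =>
      inoCoord f x₁ x₂ κ P p c W τ σ φ Ω j x +
        τ • (∫ y in Ω,
          φ ((inoKernel f x₁ x₂ κ x y).mulVec
            (inoHidden f x₁ x₂ κ P p c W τ σ Ω j y)) • (x - y))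

section Aux

variable {d dₕ : ℕ}
  (R : EuclideanSpace ℝ (Fin d) ≃ₗᵢ[ℝ] EuclideanSpace ℝ (Fin d))
  (g : EuclideanSpace ℝ (Fin d)) (T : EuclideanSpace ℝ (Fin d) → EuclideanSpace ℝ (Fin d))

lemma overline_map (e z : EuclideanSpace ℝ (Fin d)) :
    overline (R e) (R z) = overline e z := by
  simp [overline, R.inner_map_map, R.norm_map]

lemma T_sub (hT : ∀ x, T x = R x + g) (x y : EuclideanSpace ℝ (Fin d)) :
    T y - T x = R (y - x) := by
  rw [hT, hT, map_sub]; abel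

lemma inoKernel_inv (hT : ∀ x, T x = R x + g)
    (f f' : EuclideanSpace ℝ (Fin d) → EuclideanSpace ℝ (Fin d))
    (hf : ∀ x, f' (T x) = R (f x))
    (x₁ x₂ : EuclideanSpace ℝ (Fin d))
    (κ : ℝ × ℝ → ℝ → ℝ → Matrix (Fin dₕ) (Fin dₕ) ℝ)
    (x y : EuclideanSpace ℝ (Fin d)) :
    inoKernel f' (T x₁) (T x₂) κ (T x) (T y) = inoKernel f x₁ x₂ κ x y := by
  rw [inoKernel, inoKernel, T_sub R g T hT, T_sub R g T hT, overline_map,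
    hf, hf, R.norm_map, R.norm_map]

lemma T_measurePreserving (hT : ∀ x, T x = R x + g) :
    MeasurePreserving T (volume : Measure (EuclideanSpace ℝ (Fin d))) volume := by
  have : T = (fun z => z + g) ∘ R := by funext x; simp [hT]
  rw [this]
  exact (measurePreserving_add_right volume g).comp R.measurePreserving

lemma T_measurableEmbedding (hT : ∀ x, T x = R x + g) :
    MeasurableEmbedding T := by
  have : T = ⇑(R.toHomeomorph.trans (Homeomorph.addRight g)) := by funext x; simp [hT]
  rw [this]
  exact (R.toHomeomorph.trans (Homeomorph.addRight g)).measurableEmbedding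

lemma inoHidden_inv (hT : ∀ x, T x = R x + g)
    (Ω : Set (EuclideanSpace ℝ (Fin d)))
    (f f' : EuclideanSpace ℝ (Fin d) → EuclideanSpace ℝ (Fin d))
    (hf : ∀ x, f' (T x) = R (f x))
    (x₁ x₂ : EuclideanSpace ℝ (Fin d))
    (κ : ℝ × ℝ → ℝ → ℝ → Matrix (Fin dₕ) (Fin dₕ) ℝ)
    (P p c : Fin dₕ → ℝ) (W : Matrix (Fin dₕ) (Fin dₕ) ℝ) (τ : ℝ)
    (σ : (Fin dₕ → ℝ) → (Fin dₕ → ℝ)) :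
    ∀ (j : ℕ) (x : EuclideanSpace ℝ (Fin d)),
      inoHidden f' (T x₁) (T x₂) κ P p c W τ σ (T '' Ω) j (T x) =
        inoHidden f x₁ x₂ κ P p c W τ σ Ω j x := by
  intro j
  induction j with
  | zero => intro x; simp [inoHidden, hf, R.norm_map]
  | succ j ih =>
    intro x
    rw [inoHidden, inoHidden,
      (T_measurePreserving R g T hT).setIntegral_image_emb
        (T_measurableEmbedding R g T hT) _ Ω]
    have hfun : (fun y => (inoKernel f' (T x₁) (T x₂) κ (T x) (T y)).mulVec
          (inoHidden f' (T x₁) (T x₂) κ P p c W τ σ (T '' Ω) j (T y))) =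
        fun y => (inoKernel f x₁ x₂ κ x y).mulVec
          (inoHidden f x₁ x₂ κ P p c W τ σ Ω j y) := by
      funext y
      rw [inoKernel_inv R g T hT f f' hf, ih]
    rw [hfun, ih]

end Aux

/-- the INO coordinate features are translation- and rotation-equivariant
at every layer. -/
theorem inoCoord_rigid_equivariant {d dₕ : ℕ} (hd : 1 ≤ d)
    (R : EuclideanSpace ℝ (Fin d) ≃ₗᵢ[ℝ] EuclideanSpace ℝ (Fin d))
    (g : EuclideanSpace ℝ (Fin d)) (T : EuclideanSpace ℝ (Fin d) → EuclideanSpace ℝ (Fin d))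
    (hT : ∀ x, T x = R x + g)
    (Ω : Set (EuclideanSpace ℝ (Fin d))) (hΩ : MeasurableSet Ω)
    (f f' : EuclideanSpace ℝ (Fin d) → EuclideanSpace ℝ (Fin d))
    (hf : ∀ x, f' (T x) = R (f x))
    (x₁ x₂ : EuclideanSpace ℝ (Fin d))
    (κ : ℝ × ℝ → ℝ → ℝ → Matrix (Fin dₕ) (Fin dₕ) ℝ)
    (P p c : Fin dₕ → ℝ) (W : Matrix (Fin dₕ) (Fin dₕ) ℝ) (τ : ℝ)
    (σ : (Fin dₕ → ℝ) → (Fin dₕ → ℝ)) (φ : (Fin dₕ → ℝ) → ℝ) :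
    ∀ (x : EuclideanSpace ℝ (Fin d)) (j : ℕ),
      inoCoord f' (T x₁) (T x₂) κ P p c W τ σ φ (T '' Ω) j (T x) =
        R (inoCoord f x₁ x₂ κ P p c W τ σ φ Ω j x) + g := by
  intro x j
  induction j with
  | zero => simp [inoCoord, hT]
  | succ j ih =>
    rw [inoCoord, inoCoord,
      (T_measurePreserving R g T hT).setIntegral_image_emb
        (T_measurableEmbedding R g T hT) _ Ω]
    have hfun : (fun y => φ ((inoKernel f' (T x₁) (T x₂) κ (T x) (T y)).mulVec
          (inoHidden f' (T x₁) (T x₂) κ P p c W τ σ (T '' Ω) j (T y))) • (T x - T y)) =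
        fun y => R (φ ((inoKernel f x₁ x₂ κ x y).mulVec
          (inoHidden f x₁ x₂ κ P p c W τ σ Ω j y)) • (x - y)) := by
      funext y
      rw [inoKernel_inv R g T hT f f' hf,
        inoHidden_inv R g T hT Ω f f' hf, T_sub R g T hT]
      exact (R.map_smul _ _).symm
    have hint : (∫ y in Ω, R (φ ((inoKernel f x₁ x₂ κ x y).mulVec
          (inoHidden f x₁ x₂ κ P p c W τ σ Ω j y)) • (x - y))) =
        R (∫ y in Ω, φ ((inoKernel f x₁ x₂ κ x y).mulVec
          (inoHidden f x₁ x₂ κ P p c W τ σ Ω j y)) • (x - y)) :=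
      R.toLinearIsometry.integral_comp_comm _
    rw [hfun, ih, hint, map_add, R.map_smul]
    abel
end

section
/- (Invariance/equivariance for INO-vector.) Let E = EuclideanSpace ℝ (Fin d) with d ≥ 1, let T x = R x + g be a rigid motion of E, Ω ⊆ E a measurable set, and let f, f̃ : E → E satisfy f̃ (T x) = R (f x) for all x ∈ E. Let h, h̃ be the INO hidden features and X, X̃ the INO coordinate features built as in the INO-vector architecture from (f, reference points x₁, x₂, κ, P, p, τ, W, c, σ, φ, Ω) and from (f̃, T x₁, T x₂, κ, P, p, τ, W, c, σ, φ, T '' Ω) respectively. Fix a depth L ∈ ℕ and define the INO-vector outputs by the projection G[f](x) := X x L − x and G̃[f̃](x') := X̃ x' L − x'. Then the learned operator is translation-invariant and rotation-equivariant: G̃[f̃] (T x) = R (G[f] x) for all x ∈ E. -/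
open MeasureTheory
open scoped RealInnerProductSpace

/-- Invariance/equivariance for INO-vector: with the projection
`G[f](x) := X x L - x`, the INO-vector operator is translation-invariant and
rotation-equivariant. -/
theorem ino_vector_rigid_equivariant {d dₕ : ℕ} (hd : 1 ≤ d)
    (R : EuclideanSpace ℝ (Fin d) ≃ₗᵢ[ℝ] EuclideanSpace ℝ (Fin d))
    (g : EuclideanSpace ℝ (Fin d)) (T : EuclideanSpace ℝ (Fin d) → EuclideanSpace ℝ (Fin d))
    (hT : ∀ x, T x = R x + g)
    (Ω : Set (EuclideanSpace ℝ (Fin d))) (hΩ : MeasurableSet Ω)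
    (f f' : EuclideanSpace ℝ (Fin d) → EuclideanSpace ℝ (Fin d))
    (hf : ∀ x, f' (T x) = R (f x))
    (x₁ x₂ : EuclideanSpace ℝ (Fin d))
    (κ : ℝ × ℝ → ℝ → ℝ → Matrix (Fin dₕ) (Fin dₕ) ℝ)
    (P p c : Fin dₕ → ℝ) (W : Matrix (Fin dₕ) (Fin dₕ) ℝ) (τ : ℝ)
    (σ : (Fin dₕ → ℝ) → (Fin dₕ → ℝ)) (φ : (Fin dₕ → ℝ) → ℝ)
    (L : ℕ) :
    ∀ x : EuclideanSpace ℝ (Fin d),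
      inoCoord f' (T x₁) (T x₂) κ P p c W τ σ φ (T '' Ω) L (T x) - T x =
        R (inoCoord f x₁ x₂ κ P p c W τ σ φ Ω L x - x) := by
  have hTeq : ∀ a b : EuclideanSpace ℝ (Fin d), T a - T b = R (a - b) := by
    intro a b; rw [hT, hT, map_sub]; abel
  -- kernel invariance
  have hker : ∀ x y, inoKernel f' (T x₁) (T x₂) κ (T x) (T y) = inoKernel f x₁ x₂ κ x y := by
    intro x y
    simp only [inoKernel, overline, hTeq, hf, R.norm_map, R.inner_map_map]
  -- measure-theoretic setup
  have hmp : MeasurePreserving T volume volume := by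
    have h2 := (measurePreserving_add_right
      (volume : Measure (EuclideanSpace ℝ (Fin d))) g).comp R.measurePreserving
    have : T = (fun y : EuclideanSpace ℝ (Fin d) => y + g) ∘ R := by
      funext x; simp [hT]
    rw [this]; exact h2
  have hemb : MeasurableEmbedding T := by
    have h := (R.toHomeomorph.trans (Homeomorph.addRight g)).measurableEmbedding
    have : T = ⇑(R.toHomeomorph.trans (Homeomorph.addRight g)) := by
      funext x; rw [hT]; rfl
    rw [this]; exact h
  -- hidden invariance
  have hhid : ∀ j x, inoHidden f' (T x₁) (T x₂) κ P p c W τ σ (T '' Ω) j (T x) =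
      inoHidden f x₁ x₂ κ P p c W τ σ Ω j x := by
    intro j
    induction j with
    | zero => intro x; simp only [inoHidden, hf, R.norm_map]
    | succ j ih =>
      intro x
      have hint : (∫ y in T '' Ω, (inoKernel f' (T x₁) (T x₂) κ (T x) y).mulVec
            (inoHidden f' (T x₁) (T x₂) κ P p c W τ σ (T '' Ω) j y)) =
          ∫ y in Ω, (inoKernel f x₁ x₂ κ x y).mulVec
            (inoHidden f x₁ x₂ κ P p c W τ σ Ω j y) := by
        rw [hmp.setIntegral_image_emb hemb]
        exact setIntegral_congr_fun hΩ (fun y _ => by rw [hker, ih])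
      show inoHidden f' (T x₁) (T x₂) κ P p c W τ σ (T '' Ω) j (T x) + _ = _
      rw [ih, hint]
      rfl
  -- coordinate equivariance: X' j (T x) = T (X j x)
  have hcoord : ∀ j x, inoCoord f' (T x₁) (T x₂) κ P p c W τ σ φ (T '' Ω) j (T x) =
      T (inoCoord f x₁ x₂ κ P p c W τ σ φ Ω j x) := by
    intro j
    induction j with
    | zero => intro x; rfl
    | succ j ih =>
      intro x
      have hint : (∫ y in T '' Ω,
            φ ((inoKernel f' (T x₁) (T x₂) κ (T x) y).mulVec
              (inoHidden f' (T x₁) (T x₂) κ P p c W τ σ (T '' Ω) j y)) • (T x - y)) =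
          R (∫ y in Ω,
            φ ((inoKernel f x₁ x₂ κ x y).mulVec
              (inoHidden f x₁ x₂ κ P p c W τ σ Ω j y)) • (x - y)) := by
        rw [hmp.setIntegral_image_emb hemb]
        calc (∫ y in Ω, φ ((inoKernel f' (T x₁) (T x₂) κ (T x) (T y)).mulVec
              (inoHidden f' (T x₁) (T x₂) κ P p c W τ σ (T '' Ω) j (T y))) • (T x - T y))
            = ∫ y in Ω, R.toLinearIsometry
              (φ ((inoKernel f x₁ x₂ κ x y).mulVec
                (inoHidden f x₁ x₂ κ P p c W τ σ Ω j y)) • (x - y)) := by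
              refine setIntegral_congr_fun hΩ (fun y _ => ?_)
              rw [hker, hhid, hTeq]
              simp [LinearIsometryEquiv.coe_toLinearIsometry]
          _ = R (∫ y in Ω, φ ((inoKernel f x₁ x₂ κ x y).mulVec
              (inoHidden f x₁ x₂ κ P p c W τ σ Ω j y)) • (x - y)) :=
              R.toLinearIsometry.integral_comp_comm _
      show inoCoord f' (T x₁) (T x₂) κ P p c W τ σ φ (T '' Ω) j (T x) + _ = _
      rw [ih, hint, hT, hT]
      conv_rhs => rw [inoCoord]
      rw [map_add, LinearIsometryEquiv.map_smul]
      abel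
  intro x
  rw [hcoord, hT, hT, map_sub]
  abel
end

section
/- (Equivariance for INO-vector.) Let E = EuclideanSpace ℝ (Fin d) with d ≥ 1, let T x = R x + g be a rigid motion of E, Ω ⊆ E a measurable set, and let f, f̃ : E → E satisfy f̃ (T x) = R (f x) for all x ∈ E. Let h, h̃ be the INO hidden features and X, X̃ the INO coordinate features built as in the INO-vector architecture from (f, reference points x₁, x₂, κ, P, p, τ, W, c, σ, φ, Ω) and from (f̃, T x₁, T x₂, κ, P, p, τ, W, c, σ, φ, T '' Ω) respectively. Fix a depth L ∈ ℕ and define the outputs by the equivariant projection G[f](x) := X x L and G̃[f̃](x') := X̃ x' L. Then the learned operator is translation- and rotation-equivariant: G̃[f̃] (T x) = R (G[f] x) + g for all x ∈ E. -/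
open MeasureTheory
open scoped RealInnerProductSpace

/-- Equivariance for INO-vector: with the equivariant projection
`G[f](x) := X x L`, the INO-vector operator is translation- and rotation-equivariant. -/
theorem ino_vector_rigid_full_equivariant {d dₕ : ℕ} (hd : 1 ≤ d)
    (R : EuclideanSpace ℝ (Fin d) ≃ₗᵢ[ℝ] EuclideanSpace ℝ (Fin d))
    (g : EuclideanSpace ℝ (Fin d)) (T : EuclideanSpace ℝ (Fin d) → EuclideanSpace ℝ (Fin d))
    (hT : ∀ x, T x = R x + g)
    (Ω : Set (EuclideanSpace ℝ (Fin d))) (hΩ : MeasurableSet Ω)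
    (f f' : EuclideanSpace ℝ (Fin d) → EuclideanSpace ℝ (Fin d))
    (hf : ∀ x, f' (T x) = R (f x))
    (x₁ x₂ : EuclideanSpace ℝ (Fin d))
    (κ : ℝ × ℝ → ℝ → ℝ → Matrix (Fin dₕ) (Fin dₕ) ℝ)
    (P p c : Fin dₕ → ℝ) (W : Matrix (Fin dₕ) (Fin dₕ) ℝ) (τ : ℝ)
    (σ : (Fin dₕ → ℝ) → (Fin dₕ → ℝ)) (φ : (Fin dₕ → ℝ) → ℝ)
    (L : ℕ) :
    ∀ x : EuclideanSpace ℝ (Fin d),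
      inoCoord f' (T x₁) (T x₂) κ P p c W τ σ φ (T '' Ω) L (T x) =
        R (inoCoord f x₁ x₂ κ P p c W τ σ φ Ω L x) + g := by
  -- T as a homeomorphism
  have hTfun : T = fun x => R x + g := funext hT
  have hTmp : MeasurePreserving T volume volume := by
    rw [hTfun]
    exact (measurePreserving_add_right volume g).comp R.measurePreserving
  have hTemb : MeasurableEmbedding T := by
    rw [hTfun]
    exact (R.toHomeomorph.trans (Homeomorph.addRight g)).measurableEmbedding
  -- overline equivariance
  have hover : ∀ e z : EuclideanSpace ℝ (Fin d), overline (R e) (R z) = overline e z := by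
    intro e z
    simp [overline, R.inner_map_map z e]
  -- kernel equivariance
  have hker : ∀ x y : EuclideanSpace ℝ (Fin d),
      inoKernel f' (T x₁) (T x₂) κ (T x) (T y) = inoKernel f x₁ x₂ κ x y := by
    intro x y
    have h1 : T x₂ - T x₁ = R (x₂ - x₁) := by simp [hT, map_sub]
    have h2 : T y - T x = R (y - x) := by simp [hT, map_sub]
    rw [inoKernel, inoKernel, h1, h2, hover, hf, hf, R.norm_map, R.norm_map]
  -- hidden equivariance
  have hhid : ∀ j x, inoHidden f' (T x₁) (T x₂) κ P p c W τ σ (T '' Ω) j (T x) =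
      inoHidden f x₁ x₂ κ P p c W τ σ Ω j x := by
    intro j
    induction j with
    | zero => intro x; simp [inoHidden, hf, R.norm_map]
    | succ j ih =>
      intro x
      have hint : (∫ y in T '' Ω, (inoKernel f' (T x₁) (T x₂) κ (T x) y).mulVec
            (inoHidden f' (T x₁) (T x₂) κ P p c W τ σ (T '' Ω) j y)) =
          ∫ y in Ω, (inoKernel f x₁ x₂ κ x y).mulVec
            (inoHidden f x₁ x₂ κ P p c W τ σ Ω j y) := by
        rw [hTmp.setIntegral_image_emb hTemb]
        exact setIntegral_congr_fun hΩ fun y _ => by rw [hker, ih]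
      simp only [inoHidden, ih, hint]
  -- coordinate equivariance
  induction L with
  | zero => intro x; simp [inoCoord, hT]
  | succ L ih =>
    intro x
    have hint : (∫ y in T '' Ω,
          φ ((inoKernel f' (T x₁) (T x₂) κ (T x) y).mulVec
            (inoHidden f' (T x₁) (T x₂) κ P p c W τ σ (T '' Ω) L y)) • (T x - y)) =
        R (∫ y in Ω, φ ((inoKernel f x₁ x₂ κ x y).mulVec
            (inoHidden f x₁ x₂ κ P p c W τ σ Ω L y)) • (x - y)) := by
      calc (∫ y in T '' Ω,
            φ ((inoKernel f' (T x₁) (T x₂) κ (T x) y).mulVec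
              (inoHidden f' (T x₁) (T x₂) κ P p c W τ σ (T '' Ω) L y)) • (T x - y)) =
          ∫ y in Ω, R.toLinearIsometry
            (φ ((inoKernel f x₁ x₂ κ x y).mulVec
              (inoHidden f x₁ x₂ κ P p c W τ σ Ω L y)) • (x - y)) := by
            rw [hTmp.setIntegral_image_emb hTemb]
            refine setIntegral_congr_fun hΩ fun y _ => ?_
            have h2 : T x - T y = R (x - y) := by simp [hT, map_sub]
            rw [hker, hhid, h2]
            simp [LinearIsometry.map_smul]
        _ = R (∫ y in Ω, φ ((inoKernel f x₁ x₂ κ x y).mulVec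
              (inoHidden f x₁ x₂ κ P p c W τ σ Ω L y)) • (x - y)) :=
            R.toLinearIsometry.integral_comp_comm _
    simp only [inoCoord, ih, hint]
    rw [map_add, LinearIsometryEquiv.map_smul]
    abel
end
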